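/- The directed circulant Circ(9; {1,2,3,4,6,7}) minus the three arcs (3,1), (4,2), (5,0) admits a decomposition into five directed 9-cycles and three pairwise vertex-disjoint directed paths: a (1,3)-path of length 1, a (2,4)-path of length 1, and a (0,5)-path of length 4. -/

import Mathlib

/-- Arc set of the directed cycle on `Z_9` enumerated by `c`. -/
def cycArcs9 (c : ZMod 9 → ZMod 9) : Set (ZMod 9 × ZMod 9) :=
  {p | ∃ i : ZMod 9, p = (c i, c (i + 1))}

/-- Arc set of the directed path with vertex sequence `p 0, p 1, …, p n`. -/
def pathArcs9 {n : ℕ} (p : Fin (n + 1) → ZMod 9) : Set (ZMod 9 × ZMod 9) :=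
  {q | ∃ i : Fin n, q = (p i.castSucc, p i.succ)}

/-!
The decomposition is given explicitly. Once every arc set is written as a `Finset`, pairwise
disjointness of the eight pieces and their covering of the `54 - 3 = 51 = 5 · 9 + 1 + 1 + 4`
remaining arcs are finite computations.
-/

open Finset Function

def cycArcFinset (c : ZMod 9 → ZMod 9) : Finset (ZMod 9 × ZMod 9) :=
  univ.image fun i => (c i, c (i + 1))

def pathArcFinset {n : ℕ} (p : Fin (n + 1) → ZMod 9) : Finset (ZMod 9 × ZMod 9) :=
  univ.image fun i : Fin n => (p i.castSucc, p i.succ)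

theorem coe_cycArcFinset (c : ZMod 9 → ZMod 9) : (cycArcFinset c : Set _) = cycArcs9 c := by
  ext; simp [cycArcFinset, cycArcs9, eq_comm]

theorem coe_pathArcFinset {n : ℕ} (p : Fin (n + 1) → ZMod 9) :
    (pathArcFinset p : Set _) = pathArcs9 p := by
  ext; simp [pathArcFinset, pathArcs9, eq_comm]

def circ9RemainingArcs : Finset (ZMod 9 × ZMod 9) :=
  univ.filter (fun q : ZMod 9 × ZMod 9 => q.2 - q.1 ∈ ({1, 2, 3, 4, 6, 7} : Finset (ZMod 9))) \
    {(3, 1), (4, 2), (5, 0)}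

theorem coe_circ9RemainingArcs : (circ9RemainingArcs : Set (ZMod 9 × ZMod 9)) =
    {q : ZMod 9 × ZMod 9 | q.2 - q.1 ∈ ({1, 2, 3, 4, 6, 7} : Set (ZMod 9))} \
      {((3 : ZMod 9), (1 : ZMod 9)), ((4 : ZMod 9), (2 : ZMod 9)),
       ((5 : ZMod 9), (0 : ZMod 9))} := by
  ext; simp [circ9RemainingArcs]

def cycleOfSeq (v : Fin 9 → ZMod 9) : ZMod 9 → ZMod 9 := fun i => v ⟨i.val, i.val_lt⟩

def hamCycle : Fin 5 → ZMod 9 → ZMod 9 :=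
  ![cycleOfSeq ![0, 1, 2, 3, 4, 7, 5, 6, 8],
    cycleOfSeq ![0, 2, 5, 3, 6, 4, 8, 1, 7],
    cycleOfSeq ![0, 3, 5, 7, 4, 1, 8, 2, 6],
    cycleOfSeq ![0, 4, 6, 1, 5, 8, 3, 7, 2],
    cycleOfSeq ![0, 7, 1, 4, 5, 2, 8, 6, 3]]

def path13 : Fin 2 → ZMod 9 := ![1, 3]

def path24 : Fin 2 → ZMod 9 := ![2, 4]

def path05 : Fin 5 → ZMod 9 := ![0, 6, 7, 8, 5]

def decompositionPieces : Fin 8 → Finset (ZMod 9 × ZMod 9) :=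
  ![cycArcFinset (hamCycle 0), cycArcFinset (hamCycle 1), cycArcFinset (hamCycle 2),
    cycArcFinset (hamCycle 3), cycArcFinset (hamCycle 4), pathArcFinset path13,
    pathArcFinset path24, pathArcFinset path05]

theorem hamCycle_injective (t : Fin 5) : Injective (hamCycle t) := by
  fin_cases t <;> decide

theorem coe_decompositionPieces :
    (fun i => (decompositionPieces i : Set (ZMod 9 × ZMod 9))) =
      ![cycArcs9 (hamCycle 0), cycArcs9 (hamCycle 1), cycArcs9 (hamCycle 2),
        cycArcs9 (hamCycle 3), cycArcs9 (hamCycle 4), pathArcs9 path13, pathArcs9 path24,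
        pathArcs9 path05] := by
  funext i
  fin_cases i <;> simp [decompositionPieces, coe_cycArcFinset, coe_pathArcFinset]

theorem decompositionPieces_pairwise_disjoint : Pairwise (Disjoint on decompositionPieces) := by
  unfold Pairwise onFun
  decide

theorem union_arcFinsets_eq_circ9RemainingArcs :
    cycArcFinset (hamCycle 0) ∪ cycArcFinset (hamCycle 1) ∪ cycArcFinset (hamCycle 2) ∪
        cycArcFinset (hamCycle 3) ∪ cycArcFinset (hamCycle 4) ∪ pathArcFinset path13 ∪
        pathArcFinset path24 ∪ pathArcFinset path05 =
      circ9RemainingArcs := by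
  rw [Finset.ext_iff]
  decide +kernel

/-- The directed circulant `Circ(9; {1,2,3,4,6,7})` minus the three arcs
`(3,1)`, `(4,2)`, `(5,0)` admits a decomposition into five directed 9-cycles and
three pairwise vertex-disjoint directed paths: a `(1,3)`-path of length 1, a
`(2,4)`-path of length 1, and a `(0,5)`-path of length 4. -/
theorem circ9_X_decomposition :
    ∃ (c : Fin 5 → ZMod 9 → ZMod 9) (q₁ : Fin 2 → ZMod 9) (q₂ : Fin 2 → ZMod 9)
      (q₃ : Fin 5 → ZMod 9),
      (∀ t, Function.Injective (c t)) ∧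
      Function.Injective q₁ ∧ Function.Injective q₂ ∧ Function.Injective q₃ ∧
      q₁ 0 = 1 ∧ q₁ 1 = 3 ∧ q₂ 0 = 2 ∧ q₂ 1 = 4 ∧ q₃ 0 = 0 ∧ q₃ 4 = 5 ∧
      Disjoint (Set.range q₁) (Set.range q₂) ∧
      Disjoint (Set.range q₁) (Set.range q₃) ∧
      Disjoint (Set.range q₂) (Set.range q₃) ∧
      Pairwise (Function.onFun Disjoint
        ![cycArcs9 (c 0), cycArcs9 (c 1), cycArcs9 (c 2), cycArcs9 (c 3),
          cycArcs9 (c 4), pathArcs9 (n := 1) q₁, pathArcs9 (n := 1) q₂,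
          pathArcs9 (n := 4) q₃]) ∧
      cycArcs9 (c 0) ∪ cycArcs9 (c 1) ∪ cycArcs9 (c 2) ∪ cycArcs9 (c 3) ∪
          cycArcs9 (c 4) ∪ pathArcs9 (n := 1) q₁ ∪ pathArcs9 (n := 1) q₂ ∪
          pathArcs9 (n := 4) q₃ =
        {q : ZMod 9 × ZMod 9 | q.2 - q.1 ∈ ({1, 2, 3, 4, 6, 7} : Set (ZMod 9))} \
          {((3 : ZMod 9), (1 : ZMod 9)), ((4 : ZMod 9), (2 : ZMod 9)),
           ((5 : ZMod 9), (0 : ZMod 9))} := by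
  refine ⟨hamCycle, path13, path24, path05, hamCycle_injective, by decide, by decide, by decide,
    rfl, rfl, rfl, rfl, rfl, rfl, Set.disjoint_range_iff.mpr (by decide),
    Set.disjoint_range_iff.mpr (by decide), Set.disjoint_range_iff.mpr (by decide), ?_, ?_⟩
  · rw [← coe_decompositionPieces]
    exact fun i j hij => Finset.disjoint_coe.mpr (decompositionPieces_pairwise_disjoint hij)
  · simp only [← coe_cycArcFinset, ← coe_pathArcFinset, ← Finset.coe_union,
      ← coe_circ9RemainingArcs, union_arcFinsets_eq_circ9RemainingArcs]
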